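/- arXiv:2109.12711 — 2 statements merged into one kernel-verified Lean document; each statement's English description precedes it below -/
import Mathlib

section
/- The function R(φ) = log₂(1 + (X_i + φY_i)/Z_i) + log₂(1 + (X_j + φY_j)/(Z_j + φW_j)) is concave in φ on φ ≥ 0, provided X_i, Y_i, Z_i, X_j, Y_j, Z_j, W_j > 0 and Y_j·Z_j − X_j·W_j > 0. -/
/-! Rewriting `1 + u / v` as one fraction, each summand of `R` has the form
`log ((B + φ b) / (C + φ c))` with `c B ≤ b C` (for the near user `c = 0`, for the far user this is
`Y_j Z_j - X_j W_j > 0`). Its second derivative is `(c / (C + φ c))² - (b / (B + φ b))²`, and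
`c B ≤ b C` says exactly that `0 ≤ c / (C + φ c) ≤ b / (B + φ b)` for `φ ≥ 0`. -/

open Real Set

theorem hasDerivAt_log_affine {c d x : ℝ} (h : c + x * d ≠ 0) :
    HasDerivAt (fun y => log (c + y * d)) (d / (c + x * d)) x := by
  simpa using (((hasDerivAt_id x).mul_const d).const_add c).log h

theorem hasDerivAt_div_affine {c d x : ℝ} (h : c + x * d ≠ 0) :
    HasDerivAt (fun y => d / (c + y * d)) (-(d / (c + x * d)) ^ 2) x := by
  refine ((hasDerivAt_const x d).div
    (((hasDerivAt_id x).mul_const d).const_add c) h).congr_deriv ?_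
  simp only [id, one_mul, zero_mul, zero_sub]
  rw [neg_div, div_pow, ← sq]

theorem concaveOn_log_affine_sub_log_affine {B b C c : ℝ} (hB : 0 < B) (hC : 0 < C)
    (hc : 0 ≤ c) (h : c * B ≤ b * C) :
    ConcaveOn ℝ (Ici 0) fun x => log (B + x * b) - log (C + x * c) := by
  have hb : 0 ≤ b := nonneg_of_mul_nonneg_left (h.trans' (by positivity)) hC
  have posB : ∀ x ∈ Ici (0 : ℝ), 0 < B + x * b := fun x (hx : 0 ≤ x) => by positivity
  have posC : ∀ x ∈ Ici (0 : ℝ), 0 < C + x * c := fun x (hx : 0 ≤ x) => by positivity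
  refine concaveOn_of_hasDerivWithinAt2_nonpos (convex_Ici 0)
    (f' := fun x => b / (B + x * b) - c / (C + x * c))
    (f'' := fun x => -(b / (B + x * b)) ^ 2 - -(c / (C + x * c)) ^ 2) ?_ ?_ ?_ ?_
  · exact (continuousOn_log.comp (by fun_prop) fun x hx => (posB x hx).ne').sub
      (continuousOn_log.comp (by fun_prop) fun x hx => (posC x hx).ne')
  · intro x hx
    have hx := interior_subset hx
    exact ((hasDerivAt_log_affine (posB x hx).ne').sub
      (hasDerivAt_log_affine (posC x hx).ne')).hasDerivWithinAt
  · intro x hx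
    have hx := interior_subset hx
    exact ((hasDerivAt_div_affine (posB x hx).ne').sub
      (hasDerivAt_div_affine (posC x hx).ne')).hasDerivWithinAt
  · intro x hx
    have hx := interior_subset hx
    have hratio : c / (C + x * c) ≤ b / (B + x * b) := by
      rw [div_le_div_iff₀ (posC x hx) (posB x hx)]
      nlinarith [mem_Ici.mp hx]
    have hsq := pow_le_pow_left₀ (by have := posC x hx; positivity) hratio 2
    linarith

theorem concaveOn_logb_one_add_div_affine {base B b C c : ℝ} (hbase : 1 < base)
    (hCB : 0 < C + B) (hC : 0 < C) (hc : 0 ≤ c) (h : c * B ≤ b * C) :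
    ConcaveOn ℝ (Ici 0) fun x => logb base (1 + (B + x * b) / (C + x * c)) := by
  have hconc := concaveOn_log_affine_sub_log_affine hCB hC hc
    (show c * (C + B) ≤ (b + c) * C by linarith)
  refine (hconc.smul (inv_nonneg.mpr (log_pos hbase).le)).congr fun x (hx : 0 ≤ x) => ?_
  have hCx : 0 < C + x * c := by positivity
  have hb : 0 ≤ b + c := nonneg_of_mul_nonneg_left (by nlinarith) hC
  have hBx : 0 < C + B + x * (b + c) := by positivity
  have hsum : 1 + (B + x * b) / (C + x * c) = (C + B + x * (b + c)) / (C + x * c) := by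
    field_simp
    ring
  simp only [smul_eq_mul, hsum, logb, log_div hBx.ne' hCx.ne']
  ring

theorem stmt_0_general (Xi Yi Zi Xj Yj Zj Wj : ℝ)
    (hXi : 0 < Xi) (hYi : 0 < Yi) (hZi : 0 < Zi)
    (hXj : 0 < Xj) (hZj : 0 < Zj) (hWj : 0 < Wj)
    (hC : 0 < Yj * Zj - Xj * Wj) :
    ConcaveOn ℝ (Ici (0 : ℝ))
      (fun φ => Real.logb 2 (1 + (Xi + φ * Yi) / Zi)
        + Real.logb 2 (1 + (Xj + φ * Yj) / (Zj + φ * Wj))) := by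
  have hnear := concaveOn_logb_one_add_div_affine (B := Xi) (b := Yi) (c := 0) one_lt_two
    (by positivity) hZi le_rfl (by rw [zero_mul]; positivity)
  have hfar := concaveOn_logb_one_add_div_affine (B := Xj) (b := Yj) one_lt_two
    (by positivity) hZj hWj.le (by linarith)
  simp only [mul_zero, add_zero] at hnear
  exact hnear.add hfar

theorem stmt_0 (Xi Yi Zi Xj Yj Zj Wj : ℝ)
    (hXi : 0 < Xi) (hYi : 0 < Yi) (hZi : 0 < Zi)
    (hXj : 0 < Xj) (hYj : 0 < Yj) (hZj : 0 < Zj) (hWj : 0 < Wj)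
    (hC : 0 < Yj * Zj - Xj * Wj) :
    ConcaveOn ℝ (Ici (0 : ℝ))
      (fun φ => Real.logb 2 (1 + (Xi + φ * Yi) / Zi)
        + Real.logb 2 (1 + (Xj + φ * Yj) / (Zj + φ * Wj))) :=
  stmt_0_general Xi Yi Zi Xj Yj Zj Wj hXi hYi hZi hXj hZj hWj hC
end

section
/- If C_j := Y_j·Z_j − X_j·W_j > 0 and all constants X_i, Y_i, Z_i, X_j, Y_j, Z_j, W_j are positive, then the function R(φ) = log₂(1 + (X_i + φY_i)/Z_i) + log₂(1 + (X_j + φY_j)/(Z_j + φW_j)) is strictly increasing on φ ≥ 0. -/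
open Real Set

theorem stmt_2 (Xi Yi Zi Xj Yj Zj Wj : ℝ)
    (hXi : 0 < Xi) (hYi : 0 < Yi) (hZi : 0 < Zi)
    (hXj : 0 < Xj) (hYj : 0 < Yj) (hZj : 0 < Zj) (hWj : 0 < Wj)
    (hC : 0 < Yj * Zj - Xj * Wj) :
    StrictMonoOn
      (fun φ => Real.logb 2 (1 + (Xi + φ * Yi) / Zi)
        + Real.logb 2 (1 + (Xj + φ * Yj) / (Zj + φ * Wj)))
      (Ici (0 : ℝ)) := by
  intro a ha b hb hab
  simp only [mem_Ici] at ha hb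
  have hda : 0 < Zj + a * Wj := by positivity
  have hdb : 0 < Zj + b * Wj := by positivity
  have h1 : Real.logb 2 (1 + (Xi + a * Yi) / Zi) < Real.logb 2 (1 + (Xi + b * Yi) / Zi) := by
    apply Real.logb_lt_logb (by norm_num)
    · positivity
    · have : (Xi + a * Yi) / Zi < (Xi + b * Yi) / Zi := by
        rw [div_lt_div_iff_of_pos_right hZi]; nlinarith
      linarith
  have h2 : Real.logb 2 (1 + (Xj + a * Yj) / (Zj + a * Wj))
      < Real.logb 2 (1 + (Xj + b * Yj) / (Zj + b * Wj)) := by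
    apply Real.logb_lt_logb (by norm_num)
    · positivity
    · have : (Xj + a * Yj) / (Zj + a * Wj) < (Xj + b * Yj) / (Zj + b * Wj) := by
        rw [div_lt_div_iff₀ hda hdb]
        nlinarith
      linarith
  exact add_lt_add h1 h2
end
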